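/- arXiv:dg-ga/9611005 — 8 statements merged into one kernel-verified Lean document; each statement's English description precedes it below -/
import Mathlib

section
/- Let (V,ω) be a 4-dimensional real symplectic vector space and j : V → V linear with ω(jX,Y) = ω(X,jY) for all X,Y. Suppose j² = -f²·id for some real f ≠ 0. Then for the 2-form θ(X,Y) := ω(jX,Y) one has θ∧ω = 0 (as a 4-form on V). -/
/-- The wedge product of two alternating 2-forms, evaluated on four vectors
(standard shuffle formula). -/
def wedge2 {V : Type*} [AddCommGroup V] [Module ℝ V]
    (θ ω : V →ₗ[ℝ] V →ₗ[ℝ] ℝ) (a b c d : V) : ℝ :=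
  θ a b * ω c d - θ a c * ω b d + θ a d * ω b c
    + θ c d * ω a b - θ b d * ω a c + θ b c * ω a d

private lemma bilin_expand {V : Type*} [AddCommGroup V] [Module ℝ V]
    (β : V →ₗ[ℝ] V →ₗ[ℝ] ℝ) (e : Fin 4 → V) (p q : Fin 4 → ℝ) :
    β (∑ i, p i • e i) (∑ j, q j • e j)
      = ∑ i, ∑ j, p i * q j * β (e i) (e j) := by
  rw [map_sum]
  simp only [LinearMap.sum_apply, map_sum, map_smul, LinearMap.smul_apply, smul_eq_mul,
    Finset.mul_sum]
  rw [Finset.sum_comm]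
  exact Finset.sum_congr rfl fun i _ => Finset.sum_congr rfl fun k _ => by ring

/-- On a 4-dimensional real symplectic vector space (V,ω), if j is ω-symmetric
(ω(jX,Y) = ω(X,jY)) and j² = -f²·id with f ≠ 0, then for θ(X,Y) := ω(jX,Y) one has
θ∧ω = 0 as a 4-form. -/
theorem theta_wedge_omega_zero
    {V : Type*} [AddCommGroup V] [Module ℝ V] [FiniteDimensional ℝ V]
    (hdim : Module.finrank ℝ V = 4)
    (ω : V →ₗ[ℝ] V →ₗ[ℝ] ℝ)
    (hω_alt : ∀ x : V, ω x x = 0)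
    (hω_nondeg : ∀ x : V, (∀ y : V, ω x y = 0) → x = 0)
    (j : V →ₗ[ℝ] V)
    (hsym : ∀ X Y : V, ω (j X) Y = ω X (j Y))
    (f : ℝ) (hf : f ≠ 0)
    (hj2 : ∀ X : V, j (j X) = -(f ^ 2) • X)
    (θ : V →ₗ[ℝ] V →ₗ[ℝ] ℝ)
    (hθ : ∀ X Y : V, θ X Y = ω (j X) Y) :
    ∀ a b c d : V, wedge2 θ ω a b c d = 0 := by
  -- antisymmetry of ω
  have hanti : ∀ x y : V, ω y x = -ω x y := by
    intro x y
    have h := hω_alt (x + y)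
    simp [map_add, LinearMap.add_apply, hω_alt x, hω_alt y] at h
    linarith
  -- a nonzero vector
  have : Nontrivial V := Module.nontrivial_of_finrank_pos (R := ℝ) (by rw [hdim]; norm_num)
  obtain ⟨v₁, hv₁⟩ := exists_ne (0 : V)
  -- a vector outside span {v₁, j v₁}
  classical
  have hlt : Submodule.span ℝ {v₁, j v₁} < ⊤ := by
    apply span_lt_top_of_card_lt_finrank
    rw [hdim, Set.toFinset_insert, Set.toFinset_singleton]
    exact lt_of_le_of_lt (Finset.card_insert_le _ _) (by simp)
  obtain ⟨v₂, -, hv₂⟩ := SetLike.exists_of_lt hlt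
  set S := Submodule.span ℝ {v₁, j v₁} with hS
  have hv₁S : v₁ ∈ S := Submodule.subset_span (by simp)
  have hjv₁S : j v₁ ∈ S := Submodule.subset_span (by simp)
  have hfpos : (0:ℝ) < f ^ 2 := by positivity
  -- linear independence of v₁, j v₁, v₂, j v₂
  have li : LinearIndependent ℝ ![v₁, j v₁, v₂, j v₂] := by
    rw [Fintype.linearIndependent_iff]
    intro g hg
    rw [Fin.sum_univ_four] at hg
    simp only [Matrix.cons_val_zero, Matrix.cons_val_one, Matrix.head_cons,
      Matrix.cons_val_two, Matrix.tail_cons, Matrix.cons_val_three] at hg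
    have hg2 : g 0 • j v₁ + g 1 • (-(f ^ 2) • v₁) + g 2 • j v₂ + g 3 • (-(f ^ 2) • v₂) = 0 := by
      have h := congrArg j hg
      simpa [map_add, map_smul, hj2] using h
    -- first show g 2 = 0 and g 3 = 0
    have hm1 : g 2 • v₂ + g 3 • j v₂ ∈ S := by
      have he : g 2 • v₂ + g 3 • j v₂ = -(g 0 • v₁ + g 1 • j v₁) := by
        rw [eq_neg_iff_add_eq_zero, ← hg]; abel
      rw [he]
      exact S.neg_mem (S.add_mem (S.smul_mem _ hv₁S) (S.smul_mem _ hjv₁S))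
    have hm2 : g 2 • j v₂ + g 3 • (-(f ^ 2) • v₂) ∈ S := by
      have he : g 2 • j v₂ + g 3 • (-(f ^ 2) • v₂)
          = -(g 0 • j v₁ + g 1 • (-(f ^ 2) • v₁)) := by
        rw [eq_neg_iff_add_eq_zero, ← hg2]; abel
      rw [he]
      exact S.neg_mem (S.add_mem (S.smul_mem _ hjv₁S) (S.smul_mem _ (S.smul_mem _ hv₁S)))
    have hcomb : (g 2 ^ 2 + g 3 ^ 2 * f ^ 2) • v₂
        = g 2 • (g 2 • v₂ + g 3 • j v₂) - g 3 • (g 2 • j v₂ + g 3 • (-(f ^ 2) • v₂)) := by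
      module
    have hmem : (g 2 ^ 2 + g 3 ^ 2 * f ^ 2) • v₂ ∈ S := by
      rw [hcomb]
      exact S.sub_mem (S.smul_mem _ hm1) (S.smul_mem _ hm2)
    have h23 : g 2 = 0 ∧ g 3 = 0 := by
      by_contra hcon
      have hne : g 2 ^ 2 + g 3 ^ 2 * f ^ 2 ≠ 0 := by
        rcases not_and_or.mp hcon with h | h
        · have : 0 < g 2 ^ 2 := by positivity
          nlinarith [sq_nonneg (g 3), sq_nonneg f]
        · have : 0 < g 3 ^ 2 := by positivity
          nlinarith [sq_nonneg (g 2)]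
      exact hv₂ (by
        have := S.smul_mem (g 2 ^ 2 + g 3 ^ 2 * f ^ 2)⁻¹ hmem
        rwa [smul_smul, inv_mul_cancel₀ hne, one_smul] at this)
    obtain ⟨h2, h3⟩ := h23
    -- now g 0 and g 1
    rw [h2, h3] at hg hg2
    simp only [zero_smul, add_zero] at hg hg2
    have hcomb2 : (g 0 ^ 2 + g 1 ^ 2 * f ^ 2) • v₁
        = g 0 • (g 0 • v₁ + g 1 • j v₁) - g 1 • (g 0 • j v₁ + g 1 • (-(f ^ 2) • v₁)) := by
      module
    rw [hg, hg2] at hcomb2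
    simp only [smul_zero, sub_zero] at hcomb2
    have h01 : g 0 ^ 2 + g 1 ^ 2 * f ^ 2 = 0 := by
      rcases smul_eq_zero.mp hcomb2 with h | h
      · exact h
      · exact absurd h hv₁
    have h0 : g 0 = 0 := by nlinarith [sq_nonneg (g 0), sq_nonneg (g 1)]
    have h1 : g 1 = 0 := by
      have : g 1 ^ 2 * f ^ 2 = 0 := by nlinarith [sq_nonneg (g 0)]
      rcases mul_eq_zero.mp this with h | h
      · exact pow_eq_zero_iff (n := 2) (by norm_num) |>.mp h
      · exact absurd h (by positivity)
    intro i
    fin_cases i <;> assumption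
  -- a basis
  have hcard : Fintype.card (Fin 4) = Module.finrank ℝ V := by rw [hdim]; rfl
  let B := basisOfLinearIndependentOfCardEqFinrank li hcard
  have hB : ⇑B = ![v₁, j v₁, v₂, j v₂] := coe_basisOfLinearIndependentOfCardEqFinrank li hcard
  set e : Fin 4 → V := ![v₁, j v₁, v₂, j v₂] with he
  have hrepr : ∀ x : V, ∃ p : Fin 4 → ℝ, x = ∑ i, p i • e i := by
    intro x
    refine ⟨B.repr x, ?_⟩
    rw [← hB]
    exact (B.sum_repr x).symm
  intro a b c d
  obtain ⟨p, hp⟩ := hrepr a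
  obtain ⟨q, hq⟩ := hrepr b
  obtain ⟨r, hr⟩ := hrepr c
  obtain ⟨s, hs⟩ := hrepr d
  -- values of ω on the basis
  have h01 : ω v₁ (j v₁) = 0 := by
    have h := hsym v₁ v₁
    have h2 := hanti v₁ (j v₁)
    linarith
  have h10 : ω (j v₁) v₁ = 0 := by rw [hanti v₁ (j v₁), h01, neg_zero]
  have h23' : ω v₂ (j v₂) = 0 := by
    have h := hsym v₂ v₂
    have h2 := hanti v₂ (j v₂)
    linarith
  have h32 : ω (j v₂) v₂ = 0 := by rw [hanti v₂ (j v₂), h23', neg_zero]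
  have h12 : ω (j v₁) v₂ = ω v₁ (j v₂) := hsym v₁ v₂
  have h13 : ω (j v₁) (j v₂) = -(f ^ 2) * ω v₁ v₂ := by
    rw [hsym, hj2, map_smul, smul_eq_mul]
  have h20 : ω v₂ v₁ = -ω v₁ v₂ := hanti v₁ v₂
  have h21 : ω v₂ (j v₁) = -ω v₁ (j v₂) := by rw [hanti (j v₁) v₂, h12]
  have h30 : ω (j v₂) v₁ = -ω v₁ (j v₂) := hanti v₁ (j v₂)
  have h31 : ω (j v₂) (j v₁) = f ^ 2 * ω v₁ v₂ := by rw [hanti (j v₁) (j v₂), h13]; ring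
  -- values of θ
  have hθ0 : ∀ y, θ v₁ y = ω (j v₁) y := fun y => hθ v₁ y
  have hθ2 : ∀ y, θ v₂ y = ω (j v₂) y := fun y => hθ v₂ y
  have hθ1 : ∀ y, θ (j v₁) y = -(f ^ 2) * ω v₁ y := by
    intro y
    rw [hθ, hj2, map_smul, LinearMap.smul_apply, smul_eq_mul]
  have hθ3 : ∀ y, θ (j v₂) y = -(f ^ 2) * ω v₂ y := by
    intro y
    rw [hθ, hj2, map_smul, LinearMap.smul_apply, smul_eq_mul]
  rw [hp, hq, hr, hs]
  simp only [wedge2, Fin.sum_univ_four]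
  simp only [he, Matrix.cons_val_zero, Matrix.cons_val_one, Matrix.head_cons,
    Matrix.cons_val_two, Matrix.tail_cons, Matrix.cons_val_three]
  simp only [map_add, map_smul, LinearMap.add_apply, LinearMap.smul_apply, smul_eq_mul]
  simp only [hθ0, hθ1, hθ2, hθ3, hω_alt, h01, h10, h23', h32, h12, h13, h20, h21, h30, h31]
  ring
end

section
/- Let (V,ω) be a 4-dimensional real symplectic vector space and j : V → V linear with ω(jX,Y) = ω(X,jY) for all X,Y and j² = -f²·id for some real f ≠ 0. Then for θ(X,Y) := ω(jX,Y) one has θ∧θ = f²·(ω∧ω) as 4-forms on V. -/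
theorem AlternatingMap.eq_smul_of_apply_basis {R M ι : Type*} [CommRing R] [AddCommGroup M]
    [Module R M] [Finite ι] (e : Module.Basis ι R M) {F G : M [⋀^ι]→ₗ[R] R} {r : R}
    (h : F e = r * G e) : F = r • G :=
  sub_eq_zero.mp <| (F - r • G).map_basis_eq_zero_iff e |>.mp <| by simp [h]

section Wedge

variable {V : Type*} [AddCommGroup V] [Module ℝ V] {θ ω : V →ₗ[ℝ] V →ₗ[ℝ] ℝ}

theorem wedge2_eq_zero_of_eq (hθ : θ.IsAlt) (hω : ω.IsAlt) {v : Fin 4 → V} {i k : Fin 4}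
    (hv : v i = v k) (hik : i ≠ k) : wedge2 θ ω (v 0) (v 1) (v 2) (v 3) = 0 := by
  have hθ' := hθ.neg
  have hω' := hω.neg
  unfold wedge2
  fin_cases i <;> fin_cases k <;> grind

def wedge2AlternatingMap (hθ : θ.IsAlt) (hω : ω.IsAlt) : V [⋀^Fin 4]→ₗ[ℝ] ℝ where
  __ := MultilinearMap.mk' (fun v => wedge2 θ ω (v 0) (v 1) (v 2) (v 3))
    (fun v i x y => by
      fin_cases i <;>
        simp only [wedge2, Fin.reduceFinMk, Fin.zero_eta, Fin.mk_one, Function.update_apply,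
          Fin.reduceEq, ↓reduceIte, map_add, LinearMap.add_apply] <;>
        ring)
    (fun v i c x => by
      fin_cases i <;>
        simp only [wedge2, Fin.reduceFinMk, Fin.zero_eta, Fin.mk_one, Function.update_apply,
          Fin.reduceEq, ↓reduceIte, map_smul, LinearMap.smul_apply, smul_eq_mul] <;>
        ring)
  map_eq_zero_of_eq' _ _ _ := wedge2_eq_zero_of_eq hθ hω

theorem wedge2AlternatingMap_apply (hθ : θ.IsAlt) (hω : ω.IsAlt) (v : Fin 4 → V) :
    wedge2AlternatingMap hθ hω v = wedge2 θ ω (v 0) (v 1) (v 2) (v 3) :=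
  rfl

end Wedge

namespace LinearMap.IsSelfAdjoint

variable {V : Type*} [AddCommGroup V] [Module ℝ V] {ω : V →ₗ[ℝ] V →ₗ[ℝ] ℝ} {j : V →ₗ[ℝ] V}
  {f : ℝ}

theorem apply_map_self_eq_zero (hj : ω.IsSelfAdjoint j) (hω : ω.IsAlt) (x : V) :
    ω x (j x) = 0 := by
  have := hω.neg (j x) x
  rw [hj x x] at this
  linarith

theorem isAlt_comp (hj : ω.IsSelfAdjoint j) (hω : ω.IsAlt) : (ω ∘ₗ j).IsAlt := fun x => by
  rw [LinearMap.comp_apply, hj x x, hj.apply_map_self_eq_zero hω]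

theorem apply_map_map (hj : ω.IsSelfAdjoint j) (hj2 : ∀ X, j (j X) = -(f ^ 2) • X) (x y : V) :
    ω (j x) (j y) = -(f ^ 2) * ω x y := by
  rw [hj, hj2, map_smul, smul_eq_mul]

theorem wedge2_comp_adapted (hj : ω.IsSelfAdjoint j) (hω : ω.IsAlt)
    (hj2 : ∀ X, j (j X) = -(f ^ 2) • X) (a c : V) :
    wedge2 (ω ∘ₗ j) (ω ∘ₗ j) a (j a) c (j c) = f ^ 2 * wedge2 ω ω a (j a) c (j c) := by
  simp only [wedge2, LinearMap.comp_apply, hj2, hj.apply_map_map hj2, map_smul,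
    LinearMap.smul_apply, smul_eq_mul, hω.self_eq_zero, hj.apply_map_self_eq_zero hω, hj a c]
  ring

theorem eq_zero_of_apply_smul_add_smul_eq_zero (hj : ω.IsSelfAdjoint j)
    (hj2 : ∀ X, j (j X) = -(f ^ 2) • X) (hf : f ≠ 0) {a c : V} (hac : ω a c ≠ 0) {s t : ℝ}
    (h₁ : ω (s • a + t • j a) c = 0) (h₂ : ω (s • a + t • j a) (j c) = 0) : s = 0 ∧ t = 0 := by
  simp only [map_add, map_smul, LinearMap.add_apply, LinearMap.smul_apply, smul_eq_mul,
    hj.apply_map_map hj2, hj a c] at h₁ h₂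
  have hpos : 0 < f ^ 2 * ω a c ^ 2 + ω a (j c) ^ 2 := by positivity
  constructor
  · have : s * (f ^ 2 * ω a c ^ 2 + ω a (j c) ^ 2) = 0 := by
      linear_combination (f ^ 2 * ω a c) * h₁ + ω a (j c) * h₂
    exact (mul_eq_zero.mp this).resolve_right hpos.ne'
  · have : t * (f ^ 2 * ω a c ^ 2 + ω a (j c) ^ 2) = 0 := by
      linear_combination ω a (j c) * h₁ - ω a c * h₂
    exact (mul_eq_zero.mp this).resolve_right hpos.ne'

theorem linearIndependent_adapted (hj : ω.IsSelfAdjoint j) (hω : ω.IsAlt)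
    (hj2 : ∀ X, j (j X) = -(f ^ 2) • X) (hf : f ≠ 0) {a c : V} (hac : ω a c ≠ 0) :
    LinearIndependent ℝ ![a, j a, c, j c] := by
  have isotropic : ∀ x : V, ∀ s t : ℝ,
      ω (s • x + t • j x) x = 0 ∧ ω (s • x + t • j x) (j x) = 0 := fun x s t => by
    simp [hω.self_eq_zero, hj.apply_map_self_eq_zero hω, hj x x]
  rw [Fintype.linearIndependent_iff]
  intro g hg
  rw [Fin.sum_univ_four] at hg
  simp only [Matrix.cons_val] at hg
  have hu : g 0 • a + g 1 • j a = -(g 2 • c + g 3 • j c) :=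
    eq_neg_of_add_eq_zero_left (by rw [← hg]; abel)
  have hw : g 2 • c + g 3 • j c = -(g 0 • a + g 1 • j a) := by rw [hu, neg_neg]
  have hca : ω c a ≠ 0 := by rwa [← hω.neg, neg_ne_zero]
  obtain ⟨h₀, h₁⟩ := hj.eq_zero_of_apply_smul_add_smul_eq_zero hj2 hf hac
    (by rw [hu, map_neg, LinearMap.neg_apply, (isotropic c _ _).1, neg_zero])
    (by rw [hu, map_neg, LinearMap.neg_apply, (isotropic c _ _).2, neg_zero])
  obtain ⟨h₂, h₃⟩ := hj.eq_zero_of_apply_smul_add_smul_eq_zero hj2 hf hca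
    (by rw [hw, map_neg, LinearMap.neg_apply, (isotropic a _ _).1, neg_zero])
    (by rw [hw, map_neg, LinearMap.neg_apply, (isotropic a _ _).2, neg_zero])
  intro i
  fin_cases i <;> assumption

end LinearMap.IsSelfAdjoint

/-- On a 4-dimensional real symplectic vector space (V,ω), if j is ω-symmetric
and j² = -f²·id with f ≠ 0, then for θ(X,Y) := ω(jX,Y) one has θ∧θ = f²·(ω∧ω)
as 4-forms on V. -/
theorem theta_wedge_theta_eq
    {V : Type*} [AddCommGroup V] [Module ℝ V] [FiniteDimensional ℝ V]
    (hdim : Module.finrank ℝ V = 4)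
    (ω : V →ₗ[ℝ] V →ₗ[ℝ] ℝ)
    (hω_alt : ∀ x : V, ω x x = 0)
    (hω_nondeg : ∀ x : V, (∀ y : V, ω x y = 0) → x = 0)
    (j : V →ₗ[ℝ] V)
    (hsym : ∀ X Y : V, ω (j X) Y = ω X (j Y))
    (f : ℝ) (hf : f ≠ 0)
    (hj2 : ∀ X : V, j (j X) = -(f ^ 2) • X)
    (θ : V →ₗ[ℝ] V →ₗ[ℝ] ℝ)
    (hθ : ∀ X Y : V, θ X Y = ω (j X) Y) :
    ∀ a b c d : V, wedge2 θ θ a b c d = f ^ 2 * wedge2 ω ω a b c d := by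
  obtain rfl : θ = ω ∘ₗ j := LinearMap.ext₂ hθ
  have hω : ω.IsAlt := hω_alt
  have hj : ω.IsSelfAdjoint j := hsym
  have hθ_alt := hj.isAlt_comp hω
  have : Nontrivial V := Module.nontrivial_of_finrank_eq_succ hdim
  obtain ⟨x, hx⟩ := exists_ne (0 : V)
  obtain ⟨y, hxy⟩ : ∃ y, ω x y ≠ 0 := by
    by_contra! h
    exact hx (hω_nondeg x h)
  have hli := hj.linearIndependent_adapted hω hj2 hf hxy
  have hcard : Fintype.card (Fin 4) = Module.finrank ℝ V := by simp [hdim]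
  have key := AlternatingMap.eq_smul_of_apply_basis
    (basisOfLinearIndependentOfCardEqFinrank hli hcard)
    (F := wedge2AlternatingMap hθ_alt hθ_alt) (G := wedge2AlternatingMap hω hω) (r := f ^ 2)
    (by simpa [coe_basisOfLinearIndependentOfCardEqFinrank, wedge2AlternatingMap_apply]
      using hj.wedge2_comp_adapted hω hj2 x y)
  intro a b c d
  simpa [wedge2AlternatingMap_apply] using DFunLike.congr_fun key ![a, b, c, d]
end

section
/- Let (V,ω) be a 4-dimensional real symplectic vector space and j : V → V linear with ω(jX,Y) = ω(X,jY) for all X,Y. Suppose j is diagonalizable over ℝ with two distinct nonzero eigenvalues a ≠ b, each of multiplicity 2, and suppose θ∧ω = 0 where θ(X,Y) = ω(jX,Y). Then b = -a. -/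
/-- On a 4-dimensional symplectic vector space, if j is ω-symmetric and
diagonalizable with two distinct nonzero real eigenvalues a ≠ b of multiplicity 2 each
(i.e. V is the direct sum of the two 2-dimensional eigenspaces), and θ∧ω = 0 where
θ(X,Y) = ω(jX,Y), then b = -a. -/
theorem eigenvalues_opposite
    {V : Type*} [AddCommGroup V] [Module ℝ V] [FiniteDimensional ℝ V]
    (hdim : Module.finrank ℝ V = 4)
    (ω : V →ₗ[ℝ] V →ₗ[ℝ] ℝ)
    (hω_alt : ∀ x : V, ω x x = 0)
    (hω_nondeg : ∀ x : V, (∀ y : V, ω x y = 0) → x = 0)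
    (j : V →ₗ[ℝ] V)
    (hsym : ∀ X Y : V, ω (j X) Y = ω X (j Y))
    (a b : ℝ) (hab : a ≠ b) (ha : a ≠ 0) (hb : b ≠ 0)
    (hVa : Module.finrank ℝ (Module.End.eigenspace j a) = 2)
    (hVb : Module.finrank ℝ (Module.End.eigenspace j b) = 2)
    (hsum : Module.End.eigenspace j a ⊔ Module.End.eigenspace j b = ⊤)
    (θ : V →ₗ[ℝ] V →ₗ[ℝ] ℝ)
    (hθ : ∀ X Y : V, θ X Y = ω (j X) Y)
    (hwedge : ∀ x y z w : V, wedge2 θ ω x y z w = 0) :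
    b = -a := by
  set Ea := Module.End.eigenspace j a with hEa
  set Eb := Module.End.eigenspace j b with hEb
  -- skew-symmetry of ω
  have hskew : ∀ x y : V, ω y x = - ω x y := by
    intro x y
    have h := hω_alt (x + y)
    simp only [map_add, LinearMap.add_apply] at h
    rw [hω_alt x, hω_alt y] at h
    linarith
  -- eigenvector actions
  have hja : ∀ x ∈ Ea, j x = a • x := fun x hx => Module.End.mem_eigenspace_iff.mp hx
  have hjb : ∀ x ∈ Eb, j x = b • x := fun x hx => Module.End.mem_eigenspace_iff.mp hx
  -- orthogonality of the eigenspaces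
  have horth : ∀ x ∈ Ea, ∀ y ∈ Eb, ω x y = 0 := by
    intro x hx y hy
    have h1 : ω (j x) y = a * ω x y := by rw [hja x hx]; simp
    have h2 : ω x (j y) = b * ω x y := by rw [hjb y hy]; simp
    have h := hsym x y
    rw [h1, h2] at h
    have : (a - b) * ω x y = 0 := by ring_nf; linarith
    rcases mul_eq_zero.mp this with h' | h'
    · exact absurd (sub_eq_zero.mp h') hab
    · exact h'
  -- find a symplectic pair in Ea
  have hEa_ne : Ea ≠ ⊥ := by
    intro h; rw [h] at hVa; simp [finrank_bot] at hVa
  have hEb_ne : Eb ≠ ⊥ := by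
    intro h; rw [h] at hVb; simp [finrank_bot] at hVb
  obtain ⟨u, hu, hu0⟩ := Submodule.exists_mem_ne_zero_of_ne_bot hEa_ne
  obtain ⟨p, hp, hp0⟩ := Submodule.exists_mem_ne_zero_of_ne_bot hEb_ne
  -- get v ∈ Ea with ω u v ≠ 0
  have hune : ∃ y, ω u y ≠ 0 := by
    by_contra h
    push_neg at h
    exact hu0 (hω_nondeg u h)
  obtain ⟨y, hy⟩ := hune
  have hymem : y ∈ Ea ⊔ Eb := by rw [hsum]; trivial
  obtain ⟨ya, hya, yb, hyb, hyeq⟩ := Submodule.mem_sup.mp hymem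
  have huv : ω u ya ≠ 0 := by
    intro h
    apply hy
    rw [← hyeq, map_add, h, zero_add]
    exact horth u hu yb hyb
  -- get q ∈ Eb with ω p q ≠ 0
  have hpne : ∃ y, ω p y ≠ 0 := by
    by_contra h
    push_neg at h
    exact hp0 (hω_nondeg p h)
  obtain ⟨z, hz⟩ := hpne
  have hzmem : z ∈ Ea ⊔ Eb := by rw [hsum]; trivial
  obtain ⟨za, hza, zb, hzb, hzeq⟩ := Submodule.mem_sup.mp hzmem
  have hpq : ω p zb ≠ 0 := by
    intro h
    apply hz
    rw [← hzeq, map_add, h, add_zero]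
    rw [hskew za p]
    rw [horth za hza p hp]
    ring
  -- now evaluate the wedge condition on (u, ya, p, zb)
  set v := ya
  set q := zb
  have hv : v ∈ Ea := hya
  have hq : q ∈ Eb := hzb
  have key := hwedge u v p q
  unfold wedge2 at key
  have e1 : θ u v = a * ω u v := by rw [hθ, hja u hu]; simp
  have e2 : θ u p = 0 := by rw [hθ, hja u hu]; simp [horth u hu p hp]
  have e3 : θ u q = 0 := by rw [hθ, hja u hu]; simp [horth u hu q hq]
  have e4 : θ p q = b * ω p q := by rw [hθ, hjb p hp]; simp
  have e5 : θ v q = 0 := by rw [hθ, hja v hv]; simp [horth v hv q hq]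
  have e6 : θ v p = 0 := by rw [hθ, hja v hv]; simp [horth v hv p hp]
  have e7 : ω v p = 0 := horth v hv p hp
  have e8 : ω v q = 0 := horth v hv q hq
  have e9 : ω u p = 0 := horth u hu p hp
  have e10 : ω u q = 0 := horth u hu q hq
  rw [e1, e2, e3, e4, e5, e6, e7, e8, e9, e10] at key
  have : (a + b) * (ω u v * ω p q) = 0 := by ring_nf; ring_nf at key; linarith
  rcases mul_eq_zero.mp this with h' | h'
  · linarith [h']
  · rcases mul_eq_zero.mp h' with h'' | h''
    · exact absurd h'' huv
    · exact absurd h'' hpq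
end

section
/- Let j be an almost complex structure on a 4-manifold M, α a 1-form, and define the vector-valued 2-form R(X,Y) = N_j(X,Y) - X·α(jY) + Y·α(jX) - jX·α(Y) + jY·α(X), where N_j is the Nijenhuis tensor. If R vanishes at a point x ∈ M, then N_j vanishes at x. -/
/-- (pointwise, on the tangent space V at a point x of a 4-manifold)
Let j be an almost complex structure, α a linear form, N the (pointwise) Nijenhuis tensor,
which satisfies N(jX,Y) = -j N(X,Y), and
R(X,Y) = N(X,Y) - X·α(jY) + Y·α(jX) - jX·α(Y) + jY·α(X).
If R vanishes (at the point x), then N vanishes (at x). -/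
theorem R_zero_implies_N_zero
    {V : Type*} [AddCommGroup V] [Module ℝ V] [FiniteDimensional ℝ V]
    (hdim : Module.finrank ℝ V = 4)
    (j : V →ₗ[ℝ] V) (hj2 : ∀ X : V, j (j X) = -X)
    (α : V →ₗ[ℝ] ℝ)
    (N : V → V → V)
    (hN_alt : ∀ X Y : V, N X Y = -N Y X)
    (hNj : ∀ X Y : V, N (j X) Y = -j (N X Y))
    (R : V → V → V)
    (hR : ∀ X Y : V, R X Y
      = N X Y - α (j Y) • X + α (j X) • Y - α Y • (j X) + α X • (j Y))
    (hR0 : ∀ X Y : V, R X Y = 0) :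
    ∀ X Y : V, N X Y = 0 := by
  have hF : ∀ X Y : V, N X Y
      = α (j Y) • X - α (j X) • Y + α Y • (j X) - α X • (j Y) := by
    intro X Y
    have h := hR0 X Y
    rw [hR] at h
    linear_combination (norm := module) h
  intro X Y
  have h1 := hNj X Y
  rw [hF, hF] at h1
  have h2 := congrArg j h1
  simp only [map_add, map_sub, map_smul, map_neg, hj2] at h1 h2
  rw [hF]
  linear_combination (norm := module) (-(1:ℝ)/2) • h2
end

section
/- Let (V,ω) be a 4-dimensional symplectic vector space, j : V → V with j² = -id and ω(jX,Y) = ω(X,jY), α a linear form on V, N : V×V → V an alternating bilinear map satisfying N(jX,Y) = -jN(X,Y), and set R(X,Y) = N(X,Y) - X·α(jY) + Y·α(jX) - jX·α(Y) + jY·α(X). Suppose jR(X,Y) = 2ω(X,Y)·X_α for all X,Y, where X_α is the ω-dual of α (ω(X_α,Z) = α(Z) for all Z). If N = 0 then α = 0. -/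
/-- On a 4-dimensional symplectic vector space (V,ω), let j satisfy j² = -id
and ω(jX,Y) = ω(X,jY), let α be a linear form with ω-dual vector X_α, let N be an
alternating bilinear map with N(jX,Y) = -jN(X,Y), and set
R(X,Y) = N(X,Y) - X·α(jY) + Y·α(jX) - jX·α(Y) + jY·α(X).
If jR(X,Y) = 2ω(X,Y)·X_α for all X,Y and N = 0, then α = 0. -/
theorem N_zero_implies_alpha_zero
    {V : Type*} [AddCommGroup V] [Module ℝ V] [FiniteDimensional ℝ V]
    (hdim : Module.finrank ℝ V = 4)
    (ω : V →ₗ[ℝ] V →ₗ[ℝ] ℝ)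
    (hω_alt : ∀ x : V, ω x x = 0)
    (hω_nondeg : ∀ x : V, (∀ y : V, ω x y = 0) → x = 0)
    (j : V →ₗ[ℝ] V) (hj2 : ∀ X : V, j (j X) = -X)
    (hsym : ∀ X Y : V, ω (j X) Y = ω X (j Y))
    (α : V →ₗ[ℝ] ℝ)
    (N : V →ₗ[ℝ] V →ₗ[ℝ] V)
    (hN_alt : ∀ X : V, N X X = 0)
    (hNj : ∀ X Y : V, N (j X) Y = -j (N X Y))
    (R : V → V → V)
    (hR : ∀ X Y : V, R X Y
      = N X Y - α (j Y) • X + α (j X) • Y - α Y • (j X) + α X • (j Y))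
    (Xα : V) (hdual : ∀ Z : V, ω Xα Z = α Z)
    (hjR : ∀ X Y : V, j (R X Y) = (2 * ω X Y) • Xα)
    (hN0 : N = 0) :
    α = 0 := by
  -- antisymmetry of ω
  have hanti : ∀ X Y : V, ω X Y = -ω Y X := by
    intro X Y
    have h := hω_alt (X + Y)
    simp [map_add, hω_alt X, hω_alt Y] at h
    linarith
  by_contra hα
  obtain ⟨a, ha⟩ : ∃ a : V, α a ≠ 0 := by
    by_contra h
    push_neg at h
    exact hα (LinearMap.ext h)
  -- key identity
  have key : ∀ X Y : V,
      α Y • X - α X • Y - α (j Y) • j X + α (j X) • j Y = (2 * ω X Y) • Xα := by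
    intro X Y
    have h := hjR X Y
    rw [hR, hN0] at h
    simp only [LinearMap.zero_apply, map_add, map_sub, map_neg, map_smul, hj2,
      zero_sub, smul_neg, neg_neg] at h
    rw [← h]
    abel
  -- α (j Xα) = 0
  have hc : α (j Xα) = 0 := by
    have h2 := congrArg (fun v => α (j v)) (key Xα a)
    simp only [map_add, map_sub, map_smul, hj2, map_neg, smul_eq_mul] at h2
    rw [hdual] at h2
    have hXαXα : α Xα = 0 := by rw [← hdual]; exact hω_alt Xα
    rw [hXαXα] at h2
    -- h2 now gives 2 * α a * α (j Xα) = 0 up to ring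
    have : 2 * α a * α (j Xα) = 0 := by nlinarith [h2]
    rcases mul_eq_zero.mp this with h3 | h3
    · rcases mul_eq_zero.mp h3 with h4 | h4
      · norm_num at h4
      · exact absurd h4 ha
    · exact h3
  have hXαXα : α Xα = 0 := by rw [← hdual]; exact hω_alt Xα
  -- heq : α X • Xα + α (j X) • j Xα = 0 for all X
  have heq : ∀ X : V, α X • Xα + α (j X) • j Xα = 0 := by
    intro X
    have h := key X Xα
    rw [hXαXα, hc] at h
    have hω : ω X Xα = -α X := by rw [hanti, hdual]
    rw [hω] at h
    simp only [zero_smul, zero_sub, sub_zero] at h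
    have h2 : α X • Xα + α (j X) • j Xα = 0 := by
      linear_combination (norm := module) h
    exact h2
  have e1 := heq a
  have e2 := heq (j a)
  rw [hj2, map_neg, neg_smul] at e2
  -- e2 : α (j a) • Xα - α a • j Xα = 0 (as + neg)
  have comb : (α a * α a + α (j a) * α (j a)) • Xα = 0 := by
    have := congrArg (fun v => α a • v) e1
    have h2 := congrArg (fun v => α (j a) • v) e2
    simp only [smul_add, smul_neg, smul_zero, smul_smul] at this h2
    rw [add_smul]
    have hx : α a * α (j a) = α (j a) * α a := by ring
    rw [← sub_eq_zero]
    calc (α a * α a) • Xα + (α (j a) * α (j a)) • Xα - 0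
        = ((α a * α a) • Xα + (α a * α (j a)) • j Xα)
          + ((α (j a) * α (j a)) • Xα + -((α (j a) * α a) • j Xα)) := by
          rw [hx]; abel
      _ = 0 + 0 := by rw [this, h2]
      _ = 0 := by simp
  have hXα0 : Xα = 0 := by
    rcases smul_eq_zero.mp comb with h | h
    · have h1 := mul_self_nonneg (α a)
      have h2 := mul_self_nonneg (α (j a))
      have : α a * α a = 0 := by linarith
      exact absurd (mul_self_eq_zero.mp this) ha
    · exact h
  have : α a = 0 := by rw [← hdual, hXα0, map_zero, LinearMap.zero_apply]
  exact ha this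
end

section
/- Let (V,ω) be a 4-dimensional symplectic vector space, j with j² = -id and ω(jX,Y) = ω(X,jY), α a linear form, N alternating bilinear V×V → V with N(jX,Y) = -jN(X,Y), and R(X,Y) = N(X,Y) - X·α(jY) + Y·α(jX) - jX·α(Y) + jY·α(X). Assume jR(X,Y) = 2ω(X,Y)·X_α where ω(X_α,·) = α. Then α(jN(X,Y)) = 0 for all X,Y ∈ V; in particular the image of j∘N is contained in Ker α. -/
/-- On a 4-dimensional symplectic vector space (V,ω), let j satisfy j² = -id
and ω(jX,Y) = ω(X,jY), α a linear form with ω-dual X_α, N alternating bilinear with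
N(jX,Y) = -jN(X,Y), and R(X,Y) = N(X,Y) - X·α(jY) + Y·α(jX) - jX·α(Y) + jY·α(X).
If jR(X,Y) = 2ω(X,Y)·X_α for all X,Y, then α(jN(X,Y)) = 0 for all X,Y, i.e. the image of
j∘N lies in Ker α. -/
theorem image_jN_in_ker_alpha
    {V : Type*} [AddCommGroup V] [Module ℝ V] [FiniteDimensional ℝ V]
    (hdim : Module.finrank ℝ V = 4)
    (ω : V →ₗ[ℝ] V →ₗ[ℝ] ℝ)
    (hω_alt : ∀ x : V, ω x x = 0)
    (hω_nondeg : ∀ x : V, (∀ y : V, ω x y = 0) → x = 0)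
    (j : V →ₗ[ℝ] V) (hj2 : ∀ X : V, j (j X) = -X)
    (hsym : ∀ X Y : V, ω (j X) Y = ω X (j Y))
    (α : V →ₗ[ℝ] ℝ)
    (N : V →ₗ[ℝ] V →ₗ[ℝ] V)
    (hN_alt : ∀ X : V, N X X = 0)
    (hNj : ∀ X Y : V, N (j X) Y = -j (N X Y))
    (R : V → V → V)
    (hR : ∀ X Y : V, R X Y
      = N X Y - α (j Y) • X + α (j X) • Y - α Y • (j X) + α X • (j Y))
    (Xα : V) (hdual : ∀ Z : V, ω Xα Z = α Z)
    (hjR : ∀ X Y : V, j (R X Y) = (2 * ω X Y) • Xα) :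
    ∀ X Y : V, α (j (N X Y)) = 0 := by
  intro X Y
  have hα : α Xα = 0 := by rw [← hdual, hω_alt]
  have h := congrArg α (hjR X Y)
  rw [hR] at h
  simp only [map_sub, map_add, map_smul, hj2, smul_neg, map_neg, smul_eq_mul, hα, mul_zero] at h
  linarith [h]
end

section
/- Let (V,ω) be a 4-dimensional symplectic vector space, j with j² = -id and ω(jX,Y) = ω(X,jY), α a linear form with ω-dual X₀ := X_α ≠ 0, N alternating bilinear with N(jX,Y) = -jN(X,Y), and R(X,Y) = N(X,Y) - X·α(jY) + Y·α(jX) - jX·α(Y) + jY·α(X) satisfying jR(X,Y) = 2ω(X,Y)·X₀ for all X,Y. Suppose Y₀ ∈ V is such that (X₀, jX₀, Y₀, jY₀) is a basis of V and N(X₀,Y₀) = X₀. Then α(X₀) = α(jX₀) = α(Y₀) = 0 and α(jY₀) = 1. -/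
/-- Lemma 7, pointwise: On a 4-dimensional symplectic vector space (V,ω),
with j² = -id, ω(jX,Y) = ω(X,jY), a linear form α with nonzero ω-dual X₀, N alternating
bilinear with N(jX,Y) = -jN(X,Y), and
R(X,Y) = N(X,Y) - X·α(jY) + Y·α(jX) - jX·α(Y) + jY·α(X)
satisfying jR(X,Y) = 2ω(X,Y)·X₀ for all X,Y: if Y₀ is such that (X₀, jX₀, Y₀, jY₀) is a
basis of V and N(X₀,Y₀) = X₀, then α(X₀) = α(jX₀) = α(Y₀) = 0 and α(jY₀) = 1. -/
theorem alpha_values_on_basis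
    {V : Type*} [AddCommGroup V] [Module ℝ V] [FiniteDimensional ℝ V]
    (hdim : Module.finrank ℝ V = 4)
    (ω : V →ₗ[ℝ] V →ₗ[ℝ] ℝ)
    (hω_alt : ∀ x : V, ω x x = 0)
    (hω_nondeg : ∀ x : V, (∀ y : V, ω x y = 0) → x = 0)
    (j : V →ₗ[ℝ] V) (hj2 : ∀ X : V, j (j X) = -X)
    (hsym : ∀ X Y : V, ω (j X) Y = ω X (j Y))
    (α : V →ₗ[ℝ] ℝ)
    (X₀ : V) (hX₀ : X₀ ≠ 0) (hdual : ∀ Z : V, ω X₀ Z = α Z)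
    (N : V →ₗ[ℝ] V →ₗ[ℝ] V)
    (hN_alt : ∀ X : V, N X X = 0)
    (hNj : ∀ X Y : V, N (j X) Y = -j (N X Y))
    (R : V → V → V)
    (hR : ∀ X Y : V, R X Y
      = N X Y - α (j Y) • X + α (j X) • Y - α Y • (j X) + α X • (j Y))
    (hjR : ∀ X Y : V, j (R X Y) = (2 * ω X Y) • X₀)
    (Y₀ : V)
    (hbasis : LinearIndependent ℝ ![X₀, j X₀, Y₀, j Y₀])
    (hNXY : N X₀ Y₀ = X₀) :
    α X₀ = 0 ∧ α (j X₀) = 0 ∧ α Y₀ = 0 ∧ α (j Y₀) = 1 := by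
  have h := hjR X₀ Y₀
  rw [hR] at h
  simp only [map_sub, map_add, map_smul, hNXY, hj2, hdual] at h
  have key : (α Y₀ - 2 * α Y₀) • X₀ + (1 - α (j Y₀)) • (j X₀)
      + (-α X₀) • Y₀ + (α (j X₀)) • (j Y₀) = 0 := by
    linear_combination (norm := module) h
  have hli := Fintype.linearIndependent_iff.mp hbasis
    ![α Y₀ - 2 * α Y₀, 1 - α (j Y₀), -α X₀, α (j X₀)]
    (by simpa [Fin.sum_univ_four] using key)
  have h0 := hli 0
  have h1 := hli 1
  have h2 := hli 2
  have h3 := hli 3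
  simp [Matrix.cons_val_zero, Matrix.cons_val_one] at h0 h1 h2 h3
  refine ⟨by linarith, h3, by linarith, by linarith⟩
end

section
/- Let Π be a rank-2 distribution on ℝ⁴ admitting two vector fields ξ₁, ξ₂ spanning Π at each point and two symmetries η₁, η₂ of Π such that (ξ₁, ξ₂, η₁, η₂) is a frame at every point. Define the almost complex structure j by jξ₁ = ξ₂, jξ₂ = -ξ₁, jη₁ = η₂, jη₂ = -η₁. Then the image of the Nijenhuis tensor N_j at every point is contained in Π. -/
open VectorField

/-- The pointwise application of a field of endomorphisms to a vector field. -/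
def apField {E : Type*} [NormedAddCommGroup E] [NormedSpace ℝ E]
    (j : E → (E →L[ℝ] E)) (X : E → E) : E → E := fun x => j x (X x)

/-- The Nijenhuis tensor of an almost complex structure `j`,
N_j(ξ,η) = [jξ,jη] - j[jξ,η] - j[ξ,jη] - [ξ,η]. -/
noncomputable def nijenhuis {E : Type*} [NormedAddCommGroup E] [NormedSpace ℝ E]
    (j : E → (E →L[ℝ] E)) (X Y : E → E) : E → E :=
  lieBracket ℝ (apField j X) (apField j Y)
    - apField j (lieBracket ℝ (apField j X) Y)
    - apField j (lieBracket ℝ X (apField j Y))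
    - lieBracket ℝ X Y

/-- The pointwise Nijenhuis "tensor" as a bilinear map, expressed via `fderiv` of `j`. -/
noncomputable def nijTensor {E : Type*} [NormedAddCommGroup E] [NormedSpace ℝ E]
    (j : E → (E →L[ℝ] E)) (x : E) : E →ₗ[ℝ] E →ₗ[ℝ] E :=
  LinearMap.mk₂ ℝ (fun u v =>
      fderiv ℝ j x (j x u) v - fderiv ℝ j x (j x v) u
        + j x (fderiv ℝ j x v u) - j x (fderiv ℝ j x u v))
    (by intro u₁ u₂ v; simp only [map_add, ContinuousLinearMap.add_apply]; abel)
    (by intro a u v; simp only [map_smul, ContinuousLinearMap.smul_apply,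
          smul_sub, smul_add])
    (by intro u v₁ v₂; simp only [map_add, ContinuousLinearMap.add_apply]; abel)
    (by intro a u v; simp only [map_smul, ContinuousLinearMap.smul_apply,
          smul_sub, smul_add])

lemma nijenhuis_apply_eq {E : Type*} [NormedAddCommGroup E] [NormedSpace ℝ E]
    (j : E → (E →L[ℝ] E)) (X Y : E → E) (x : E)
    (hj : DifferentiableAt ℝ j x) (hX : DifferentiableAt ℝ X x)
    (hY : DifferentiableAt ℝ Y x)
    (hJ2 : ∀ v, j x (j x v) = -v) :
    nijenhuis j X Y x = nijTensor j x (X x) (Y x) := by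
  have hdX : fderiv ℝ (apField j X) x
      = (j x).comp (fderiv ℝ X x) + (fderiv ℝ j x).flip (X x) :=
    fderiv_clm_apply hj hX
  have hdY : fderiv ℝ (apField j Y) x
      = (j x).comp (fderiv ℝ Y x) + (fderiv ℝ j x).flip (Y x) :=
    fderiv_clm_apply hj hY
  simp only [nijenhuis, Pi.sub_apply, apField, VectorField.lieBracket, nijTensor,
    LinearMap.mk₂_apply, hdX, hdY, ContinuousLinearMap.add_apply,
    ContinuousLinearMap.comp_apply, ContinuousLinearMap.flip_apply, map_sub, map_add, hJ2]
  abel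

/-- Let Π be a rank-2 distribution on ℝ⁴ spanned at each point by vector
fields ξ₁, ξ₂, and let η₁, η₂ be symmetries of Π such that (ξ₁,ξ₂,η₁,η₂) is a frame at
every point. For the almost complex structure j defined by jξ₁ = ξ₂, jξ₂ = -ξ₁,
jη₁ = η₂, jη₂ = -η₁, the image of the Nijenhuis tensor N_j at every point is contained
in Π. -/
theorem nijenhuis_image_in_distribution
    (P : (Fin 4 → ℝ) → Submodule ℝ (Fin 4 → ℝ))
    (ξ₁ ξ₂ η₁ η₂ : (Fin 4 → ℝ) → (Fin 4 → ℝ))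
    (hξ₁ : ContDiff ℝ (⊤ : ℕ∞) ξ₁) (hξ₂ : ContDiff ℝ (⊤ : ℕ∞) ξ₂)
    (hη₁ : ContDiff ℝ (⊤ : ℕ∞) η₁) (hη₂ : ContDiff ℝ (⊤ : ℕ∞) η₂)
    (hspan : ∀ x, P x = Submodule.span ℝ {ξ₁ x, ξ₂ x})
    (hframe : ∀ x, LinearIndependent ℝ ![ξ₁ x, ξ₂ x, η₁ x, η₂ x])
    (hsymm₁ : ∀ ξ : (Fin 4 → ℝ) → (Fin 4 → ℝ), ContDiff ℝ (⊤ : ℕ∞) ξ →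
        (∀ x, ξ x ∈ P x) → ∀ x, lieBracket ℝ η₁ ξ x ∈ P x)
    (hsymm₂ : ∀ ξ : (Fin 4 → ℝ) → (Fin 4 → ℝ), ContDiff ℝ (⊤ : ℕ∞) ξ →
        (∀ x, ξ x ∈ P x) → ∀ x, lieBracket ℝ η₂ ξ x ∈ P x)
    (j : (Fin 4 → ℝ) → ((Fin 4 → ℝ) →L[ℝ] (Fin 4 → ℝ)))
    (hj_smooth : ContDiff ℝ (⊤ : ℕ∞) j)
    (hj1 : ∀ x, j x (ξ₁ x) = ξ₂ x) (hj2 : ∀ x, j x (ξ₂ x) = -ξ₁ x)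
    (hj3 : ∀ x, j x (η₁ x) = η₂ x) (hj4 : ∀ x, j x (η₂ x) = -η₁ x) :
    ∀ X Y : (Fin 4 → ℝ) → (Fin 4 → ℝ), ContDiff ℝ (⊤ : ℕ∞) X → ContDiff ℝ (⊤ : ℕ∞) Y →
      ∀ x, nijenhuis j X Y x ∈ P x := by
  intro X Y hX hY x
  -- the frame at x is a basis of ℝ⁴
  have hcard : Fintype.card (Fin 4) = Module.finrank ℝ (Fin 4 → ℝ) := by simp
  let B : Module.Basis (Fin 4) ℝ (Fin 4 → ℝ) :=
    basisOfLinearIndependentOfCardEqFinrank (hframe x) hcard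
  have hBc : ⇑B = ![ξ₁ x, ξ₂ x, η₁ x, η₂ x] :=
    coe_basisOfLinearIndependentOfCardEqFinrank _ _
  -- j x ∘ j x = -id
  have hJ2 : ∀ v, j x (j x v) = -v := by
    have heq : (↑(j x) : (Fin 4 → ℝ) →ₗ[ℝ] (Fin 4 → ℝ)) ∘ₗ (↑(j x)) = -LinearMap.id := by
      apply B.ext
      intro i
      fin_cases i <;>
        simp [hBc, hj1 x, hj2 x, hj3 x, hj4 x]
    intro v
    simpa using LinearMap.congr_fun heq v
  -- differentiability
  have hda : ∀ (V : (Fin 4 → ℝ) → (Fin 4 → ℝ)), ContDiff ℝ (⊤ : ℕ∞) V → DifferentiableAt ℝ V x :=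
    fun V hV => (hV.differentiable (by simp)).differentiableAt
  have hform : ∀ (V W : (Fin 4 → ℝ) → (Fin 4 → ℝ)), ContDiff ℝ (⊤ : ℕ∞) V → ContDiff ℝ (⊤ : ℕ∞) W →
      nijenhuis j V W x = nijTensor j x (V x) (W x) := fun V W hV hW =>
    nijenhuis_apply_eq j V W x ((hj_smooth.differentiable (by simp)).differentiableAt)
      (hda V hV) (hda W hW) hJ2
  -- membership helpers
  have hPb : ∀ (V : (Fin 4 → ℝ) → (Fin 4 → ℝ)), (V = ξ₁ ∨ V = ξ₂) → ∀ y, V y ∈ P y := by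
    rintro V (rfl | rfl) y <;> rw [hspan] <;>
      exact Submodule.subset_span (by simp)
  have hjP : ∀ v, v ∈ P x → j x v ∈ P x := by
    intro v hv
    rw [hspan] at hv ⊢
    obtain ⟨a, b, rfl⟩ := Submodule.mem_span_pair.1 hv
    rw [map_add, map_smul, map_smul, hj1, hj2]
    exact add_mem (Submodule.smul_mem _ _ (Submodule.subset_span (by simp)))
      (Submodule.smul_mem _ _ (neg_mem (Submodule.subset_span (by simp))))
  have hbr : ∀ (V : (Fin 4 → ℝ) → (Fin 4 → ℝ)), (V = ξ₁ ∨ V = ξ₂) →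
      ∀ (W : (Fin 4 → ℝ) → (Fin 4 → ℝ)), (W = η₁ ∨ W = η₂) →
      lieBracket ℝ V W x ∈ P x := by
    intro V hV W hW
    have hVc : ContDiff ℝ (⊤ : ℕ∞) V := by rcases hV with rfl | rfl; exacts [hξ₁, hξ₂]
    have h1 : lieBracket ℝ W V x ∈ P x := by
      rcases hW with rfl | rfl
      · exact hsymm₁ V hVc (hPb V hV) x
      · exact hsymm₂ V hVc (hPb V hV) x
    have h2 : lieBracket ℝ V W x = -lieBracket ℝ W V x := by
      simp only [VectorField.lieBracket, neg_sub]
    rw [h2]; exact neg_mem h1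
  -- apField on frame fields
  have e1 : apField j ξ₁ = ξ₂ := funext hj1
  have e2 : apField j ξ₂ = fun y => -ξ₁ y := funext hj2
  have e3 : apField j η₁ = η₂ := funext hj3
  have e4 : apField j η₂ = fun y => -η₁ y := funext hj4
  have hap : ∀ (Z : (Fin 4 → ℝ) → (Fin 4 → ℝ)), apField j Z x = j x (Z x) := fun _ => rfl
  have hLneg1 : ∀ (V W : (Fin 4 → ℝ) → (Fin 4 → ℝ)),
      lieBracket ℝ (fun y => -V y) W x = -lieBracket ℝ V W x := by
    intro V W
    simp only [VectorField.lieBracket, fderiv_fun_neg, ContinuousLinearMap.neg_apply, map_neg]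
    abel
  have hLneg2 : ∀ (V W : (Fin 4 → ℝ) → (Fin 4 → ℝ)),
      lieBracket ℝ V (fun y => -W y) x = -lieBracket ℝ V W x := by
    intro V W
    simp only [VectorField.lieBracket, fderiv_fun_neg, ContinuousLinearMap.neg_apply, map_neg]
    abel
  -- antisymmetry and vanishing lemmas
  have hanti : ∀ (V W : (Fin 4 → ℝ) → (Fin 4 → ℝ)),
      nijenhuis j V W x = -nijenhuis j W V x := by
    intro V W
    simp only [nijenhuis, Pi.sub_apply, apField, VectorField.lieBracket, map_sub]
    abel
  have hself : ∀ (V : (Fin 4 → ℝ) → (Fin 4 → ℝ)), nijenhuis j V V x = 0 := by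
    intro V
    simp only [nijenhuis, Pi.sub_apply, apField, VectorField.lieBracket, map_sub]
    abel
  have hz : ∀ (V W : (Fin 4 → ℝ) → (Fin 4 → ℝ)), apField j V = W →
      apField j W = (fun y => -V y) → nijenhuis j V W x = 0 := by
    intro V W h1 h2
    simp only [nijenhuis, Pi.sub_apply, h1, h2, apField, VectorField.lieBracket,
      fderiv_fun_neg, ContinuousLinearMap.neg_apply, map_sub, map_neg]
    abel
  -- mixed pairs
  have hm11 : nijenhuis j ξ₁ η₁ x ∈ P x := by
    have h0 : nijenhuis j ξ₁ η₁ x = lieBracket ℝ ξ₂ η₂ x - j x (lieBracket ℝ ξ₂ η₁ x)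
        - j x (lieBracket ℝ ξ₁ η₂ x) - lieBracket ℝ ξ₁ η₁ x := by
      simp only [nijenhuis, Pi.sub_apply, e1, e3, hap]
    rw [h0]
    exact sub_mem (sub_mem (sub_mem (hbr _ (Or.inr rfl) _ (Or.inr rfl))
      (hjP _ (hbr _ (Or.inr rfl) _ (Or.inl rfl)))) (hjP _ (hbr _ (Or.inl rfl) _ (Or.inr rfl))))
      (hbr _ (Or.inl rfl) _ (Or.inl rfl))
  have hm12 : nijenhuis j ξ₁ η₂ x ∈ P x := by
    have h0 : nijenhuis j ξ₁ η₂ x = -lieBracket ℝ ξ₂ η₁ x - j x (lieBracket ℝ ξ₂ η₂ x)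
        + j x (lieBracket ℝ ξ₁ η₁ x) - lieBracket ℝ ξ₁ η₂ x := by
      simp only [nijenhuis, Pi.sub_apply, e1, e4, hap, hLneg2, map_neg]
      abel
    rw [h0]
    refine sub_mem (add_mem (sub_mem (neg_mem ?_) (hjP _ ?_)) (hjP _ ?_)) ?_
    · exact hbr _ (Or.inr rfl) _ (Or.inl rfl)
    · exact hbr _ (Or.inr rfl) _ (Or.inr rfl)
    · exact hbr _ (Or.inl rfl) _ (Or.inl rfl)
    · exact hbr _ (Or.inl rfl) _ (Or.inr rfl)
  have hm21 : nijenhuis j ξ₂ η₁ x ∈ P x := by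
    have h0 : nijenhuis j ξ₂ η₁ x = -lieBracket ℝ ξ₁ η₂ x + j x (lieBracket ℝ ξ₁ η₁ x)
        - j x (lieBracket ℝ ξ₂ η₂ x) - lieBracket ℝ ξ₂ η₁ x := by
      simp only [nijenhuis, Pi.sub_apply, e2, e3, hap, hLneg1, map_neg]
      abel
    rw [h0]
    refine sub_mem (sub_mem (add_mem (neg_mem ?_) (hjP _ ?_)) (hjP _ ?_)) ?_
    · exact hbr _ (Or.inl rfl) _ (Or.inr rfl)
    · exact hbr _ (Or.inl rfl) _ (Or.inl rfl)
    · exact hbr _ (Or.inr rfl) _ (Or.inr rfl)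
    · exact hbr _ (Or.inr rfl) _ (Or.inl rfl)
  have hm22 : nijenhuis j ξ₂ η₂ x ∈ P x := by
    have h0 : nijenhuis j ξ₂ η₂ x = lieBracket ℝ ξ₁ η₁ x + j x (lieBracket ℝ ξ₁ η₂ x)
        + j x (lieBracket ℝ ξ₂ η₁ x) - lieBracket ℝ ξ₂ η₂ x := by
      simp only [nijenhuis, Pi.sub_apply, e2, e4, hap, hLneg1, hLneg2, map_neg]
      abel
    rw [h0]
    refine sub_mem (add_mem (add_mem ?_ (hjP _ ?_)) (hjP _ ?_)) ?_
    · exact hbr _ (Or.inl rfl) _ (Or.inl rfl)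
    · exact hbr _ (Or.inl rfl) _ (Or.inr rfl)
    · exact hbr _ (Or.inr rfl) _ (Or.inl rfl)
    · exact hbr _ (Or.inr rfl) _ (Or.inr rfl)
  -- all frame pairs
  have hNe : ∀ i k : Fin 4, nijTensor j x (B i) (B k) ∈ P x := by
    have hc12 : ContDiff ℝ (⊤ : ℕ∞) ξ₁ ∧ True := ⟨hξ₁, trivial⟩
    intro i k
    fin_cases i <;> fin_cases k <;>
      rw [hBc] <;>
      simp only [Fin.zero_eta, Fin.mk_one, Fin.reduceFinMk, Matrix.cons_val_zero,
        Matrix.cons_val_one, Matrix.head_cons, Matrix.cons_val_two, Matrix.tail_cons,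
        Matrix.cons_val_three, Matrix.head_fin_const, Fin.isValue]
    · rw [← hform ξ₁ ξ₁ hξ₁ hξ₁, hself]; exact zero_mem _
    · rw [← hform ξ₁ ξ₂ hξ₁ hξ₂, hz ξ₁ ξ₂ e1 e2]; exact zero_mem _
    · rw [← hform ξ₁ η₁ hξ₁ hη₁]; exact hm11
    · rw [← hform ξ₁ η₂ hξ₁ hη₂]; exact hm12
    · rw [← hform ξ₂ ξ₁ hξ₂ hξ₁, hanti, hz ξ₁ ξ₂ e1 e2, neg_zero]; exact zero_mem _
    · rw [← hform ξ₂ ξ₂ hξ₂ hξ₂, hself]; exact zero_mem _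
    · rw [← hform ξ₂ η₁ hξ₂ hη₁]; exact hm21
    · rw [← hform ξ₂ η₂ hξ₂ hη₂]; exact hm22
    · rw [← hform η₁ ξ₁ hη₁ hξ₁, hanti]
      exact neg_mem hm11
    · rw [← hform η₁ ξ₂ hη₁ hξ₂, hanti]
      exact neg_mem hm21
    · rw [← hform η₁ η₁ hη₁ hη₁, hself]; exact zero_mem _
    · rw [← hform η₁ η₂ hη₁ hη₂, hz η₁ η₂ e3 e4]; exact zero_mem _
    · rw [← hform η₂ ξ₁ hη₂ hξ₁, hanti]
      exact neg_mem hm12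
    · rw [← hform η₂ ξ₂ hη₂ hξ₂, hanti]
      exact neg_mem hm22
    · rw [← hform η₂ η₁ hη₂ hη₁, hanti, hz η₁ η₂ e3 e4, neg_zero]; exact zero_mem _
    · rw [← hform η₂ η₂ hη₂ hη₂, hself]; exact zero_mem _
  -- assemble by bilinearity
  rw [hform X Y hX hY, ← B.sum_repr (X x), ← B.sum_repr (Y x)]
  simp only [map_sum, map_smul, LinearMap.sum_apply, LinearMap.smul_apply]
  exact Submodule.sum_mem _ fun i _ => Submodule.smul_mem _ _
    (Submodule.sum_mem _ fun k _ => Submodule.smul_mem _ _ (hNe k i))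
end
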